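/- Let U ⊆ ℝ² be open, x : U → ℝ³ a smooth immersion with smooth unit normal n. Then the Gauss equation holds: at every point of U, det(g⁻¹K) = ½ R, where R = Σ_{a,b,d} (g⁻¹)^{bd} R^a_{bad} is the scalar curvature of g computed from the coordinate Riemann tensor R^a_{bcd} = ∂_c Γ^a_{db} − ∂_d Γ^a_{cb} + Σ_e (Γ^a_{ce} Γ^e_{db} − Γ^a_{de} Γ^e_{cb}). Equivalently, ½(H² − Σ_{a,b} K_{ab} K^{ab}) = ½ R, where K^{ab} = (g⁻¹ K g⁻¹)^{ab}. -/

import Mathlib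

open Matrix
open scoped BigOperators

/-- Partial derivative of a map in the `a`-th coordinate direction of `ℝ²`. -/
noncomputable def pd {E : Type*} [NormedAddCommGroup E] [NormedSpace ℝ E]
    (a : Fin 2) (f : (Fin 2 → ℝ) → E) (p : Fin 2 → ℝ) : E :=
  fderiv ℝ f p (Pi.single a 1)

/-! ### Calculus lemmas for `pd` -/

section pdlib
variable {f g : (Fin 2 → ℝ) → ℝ} {p : Fin 2 → ℝ} {a : Fin 2}

lemma pd_sub (hf : DifferentiableAt ℝ f p) (hg : DifferentiableAt ℝ g p) :
    pd a (fun q => f q - g q) p = pd a f p - pd a g p := by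
  simp [pd, fderiv_fun_sub hf hg]

lemma pd_mul (hf : DifferentiableAt ℝ f p) (hg : DifferentiableAt ℝ g p) :
    pd a (fun q => f q * g q) p = pd a f p * g p + f p * pd a g p := by
  simp [pd, fderiv_fun_mul hf hg]; ring

lemma pd_const (c : ℝ) : pd a (fun _ => c) p = 0 := by simp [pd]

lemma pd_sum {ι : Type*} (s : Finset ι) (F : ι → (Fin 2 → ℝ) → ℝ)
    (hF : ∀ i ∈ s, DifferentiableAt ℝ (F i) p) :
    pd a (fun q => ∑ i ∈ s, F i q) p = ∑ i ∈ s, pd a (F i) p := by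
  simp [pd, fderiv_fun_sum hF]

lemma pd_congr_nhds (h : f =ᶠ[nhds p] g) : pd a f p = pd a g p := by
  simp [pd, h.fderiv_eq]

lemma pd_apply {F : (Fin 2 → ℝ) → (Fin 3 → ℝ)} (hF : DifferentiableAt ℝ F p) (i : Fin 3) :
    pd a F p i = pd a (fun q => F q i) p := by
  have h : (fun q => F q i)
      = (ContinuousLinearMap.proj (R := ℝ) (φ := fun _ : Fin 3 => ℝ) i) ∘ F := rfl
  rw [pd, pd, h, fderiv_comp p (ContinuousLinearMap.differentiableAt _) hF]
  simp

lemma contDiffOn_pd {U : Set (Fin 2 → ℝ)} (hU : IsOpen U)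
    {E : Type*} [NormedAddCommGroup E] [NormedSpace ℝ E]
    {f : (Fin 2 → ℝ) → E} (hf : ContDiffOn ℝ (⊤ : ℕ∞) f U) (a : Fin 2) :
    ContDiffOn ℝ (⊤ : ℕ∞) (fun q => pd a f q) U := by
  have h := hf.fderiv_of_isOpen hU (m := (⊤ : ℕ∞)) (by simp)
  exact h.clm_apply contDiffOn_const

lemma pd_comm {U : Set (Fin 2 → ℝ)} (hU : IsOpen U) {f : (Fin 2 → ℝ) → ℝ}
    (hf : ContDiffOn ℝ (⊤ : ℕ∞) f U) {p} (hp : p ∈ U) (a b : Fin 2) :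
    pd a (fun q => pd b f q) p = pd b (fun q => pd a f q) p := by
  have hfp : ContDiffAt ℝ (⊤ : ℕ∞) f p := hf.contDiffAt (hU.mem_nhds hp)
  have hsym := hfp.isSymmSndFDerivAt (by rw [minSmoothness_of_isRCLikeNormedField]; exact WithTop.coe_le_coe.2 (le_top : (2:ℕ∞) ≤ ⊤))
  have hdf : DifferentiableAt ℝ (fderiv ℝ f) p :=
    (hfp.fderiv_right (m := (⊤ : ℕ∞)) ((by simp))).differentiableAt (by simp)
  have key : ∀ v w, fderiv ℝ (fun q => fderiv ℝ f q w) p v = fderiv ℝ (fderiv ℝ f) p v w := by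
    intro v w
    rw [fderiv_clm_apply hdf (differentiableAt_const w)]
    simp
  simp only [pd]
  rw [key, key, hsym]

lemma dAt {U : Set (Fin 2 → ℝ)} (hU : IsOpen U)
    {E : Type*} [NormedAddCommGroup E] [NormedSpace ℝ E]
    {f : (Fin 2 → ℝ) → E} (hf : ContDiffOn ℝ (⊤ : ℕ∞) f U) {q} (hq : q ∈ U) :
    DifferentiableAt ℝ f q :=
  (hf.contDiffAt (hU.mem_nhds hq)).differentiableAt (by simp)

end pdlib

/-! ### Linear algebra lemmas -/

lemma sum_sq_eq_zero {v : Fin 3 → ℝ} (h : ∑ i, v i * v i = 0) : ∀ i, v i = 0 := by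
  intro i
  have hnn : ∀ j ∈ Finset.univ, (0:ℝ) ≤ v j * v j := fun j _ => mul_self_nonneg _
  have := (Finset.sum_eq_zero_iff_of_nonneg hnn).1 h i (Finset.mem_univ i)
  nlinarith [this]

lemma gram_det_ne_zero (v0 v1 : Fin 3 → ℝ)
    (h : LinearIndependent ℝ (fun a : Fin 2 => ![v0, v1] a)) :
    (∑ i, v0 i * v0 i) * (∑ i, v1 i * v1 i) - (∑ i, v0 i * v1 i) * (∑ i, v1 i * v0 i) ≠ 0 := by
  intro hdet
  set g2 : Matrix (Fin 2) (Fin 2) ℝ :=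
    !![∑ i, v0 i * v0 i, ∑ i, v0 i * v1 i; ∑ i, v1 i * v0 i, ∑ i, v1 i * v1 i] with hg2
  have hdet2 : g2.det = 0 := by rw [Matrix.det_fin_two]; simpa [hg2] using hdet
  obtain ⟨w, hw, hmv⟩ := (Matrix.exists_mulVec_eq_zero_iff).2 hdet2
  have h0 : (∑ i, v0 i * v0 i) * w 0 + (∑ i, v0 i * v1 i) * w 1 = 0 := by
    have := congrFun hmv 0
    simpa [Matrix.mulVec, dotProduct, Matrix.vecHead, Matrix.vecTail, Fin.sum_univ_two, hg2] using this
  have h1 : (∑ i, v1 i * v0 i) * w 0 + (∑ i, v1 i * v1 i) * w 1 = 0 := by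
    have := congrFun hmv 1
    simpa [Matrix.mulVec, dotProduct, Matrix.vecHead, Matrix.vecTail, Fin.sum_univ_two, hg2] using this
  simp only [Fin.sum_univ_three] at h0 h1
  have hvv : ∑ i, (w 0 * v0 i + w 1 * v1 i) * (w 0 * v0 i + w 1 * v1 i) = 0 := by
    simp only [Fin.sum_univ_three]
    linear_combination w 0 * h0 + w 1 * h1
  have hz := sum_sq_eq_zero hvv
  have hwz : ∀ a : Fin 2, w a = 0 := by
    apply Fintype.linearIndependent_iff.1 h w
    funext i
    simp only [Fin.sum_univ_two, Pi.add_apply, Pi.smul_apply, smul_eq_mul]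
    simpa using hz i
  exact hw (funext fun a => hwz a)

lemma triple_orth_eq_zero (e0 e1 nn u : Fin 3 → ℝ)
    (hdet : (∑ i, e0 i * e0 i) * (∑ i, e1 i * e1 i)
        - (∑ i, e0 i * e1 i) * (∑ i, e1 i * e0 i) ≠ 0)
    (ho0 : ∑ i, nn i * e0 i = 0) (ho1 : ∑ i, nn i * e1 i = 0)
    (hn : ∑ i, nn i * nn i = 1)
    (hu0 : ∑ i, e0 i * u i = 0) (hu1 : ∑ i, e1 i * u i = 0) (hu2 : ∑ i, nn i * u i = 0) :
    ∀ i, u i = 0 := by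
  set M : Matrix (Fin 3) (Fin 3) ℝ :=
    !![e0 0, e0 1, e0 2; e1 0, e1 1, e1 2; nn 0, nn 1, nn 2] with hM
  simp only [Fin.sum_univ_three] at hdet ho0 ho1 hn hu0 hu1 hu2
  have hMMT : M * Mᵀ =
      !![e0 0 * e0 0 + e0 1 * e0 1 + e0 2 * e0 2, e0 0 * e1 0 + e0 1 * e1 1 + e0 2 * e1 2, 0;
         e1 0 * e0 0 + e1 1 * e0 1 + e1 2 * e0 2, e1 0 * e1 0 + e1 1 * e1 1 + e1 2 * e1 2, 0;
         0, 0, 1] := by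
    ext j k
    simp only [Matrix.mul_apply, Matrix.transpose_apply, Fin.sum_univ_three]
    fin_cases j <;> fin_cases k <;> simp [hM] <;>
      first
        | rfl
        | linear_combination ho0
        | linear_combination ho1
        | linear_combination hn
  have hsq : M.det * M.det =
      (e0 0 * e0 0 + e0 1 * e0 1 + e0 2 * e0 2) * (e1 0 * e1 0 + e1 1 * e1 1 + e1 2 * e1 2) -
        (e0 0 * e1 0 + e0 1 * e1 1 + e0 2 * e1 2) * (e1 0 * e0 0 + e1 1 * e0 1 + e1 2 * e0 2) := by
    rw [show M.det * M.det = (M * Mᵀ).det by rw [Matrix.det_mul, Matrix.det_transpose], hMMT,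
      Matrix.det_fin_three]
    simp
  have hdetM : M.det ≠ 0 := by
    intro h0
    apply hdet
    rw [← hsq, h0, mul_zero]
  have hmv : M *ᵥ u = 0 := by
    funext j
    fin_cases j <;>
      simp [Matrix.mulVec, dotProduct, Matrix.vecHead, Matrix.vecTail, Fin.sum_univ_three, hM] <;>
      linarith [hu0, hu1, hu2]
  have hu : u = 0 := by
    have h1 : M⁻¹ * M = 1 := Matrix.nonsing_inv_mul M (by simpa using hdetM)
    calc u = (M⁻¹ * M) *ᵥ u := by rw [h1, Matrix.one_mulVec]
    _ = M⁻¹ *ᵥ (M *ᵥ u) := by rw [Matrix.mulVec_mulVec]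
    _ = 0 := by rw [hmv, Matrix.mulVec_zero]
  intro i; rw [hu]; rfl

lemma pair_zero {g00 g01 g10 g11 C0 C1 : ℝ} (hdet : g00 * g11 - g01 * g10 ≠ 0)
    (h1 : C0 * g00 + C1 * g10 = 0) (h2 : C0 * g01 + C1 * g11 = 0) :
    C0 = 0 ∧ C1 = 0 := by
  constructor
  · have h : C0 * (g00 * g11 - g01 * g10) = 0 := by linear_combination g11 * h1 - g10 * h2
    rcases mul_eq_zero.1 h with h' | h'
    · exact h'
    · exact absurd h' hdet
  · have h : C1 * (g00 * g11 - g01 * g10) = 0 := by linear_combination g00 * h2 - g01 * h1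
    rcases mul_eq_zero.1 h with h' | h'
    · exact h'
    · exact absurd h' hdet

/-! ### Geometric quantities built from scalar components -/

noncomputable def Ecomp (x : (Fin 2 → ℝ) → (Fin 3 → ℝ)) (a : Fin 2) (i : Fin 3) :
    (Fin 2 → ℝ) → ℝ := fun q => pd a (fun r => x r i) q

noncomputable def Gmet (x : (Fin 2 → ℝ) → (Fin 3 → ℝ)) (a b : Fin 2) : (Fin 2 → ℝ) → ℝ :=
  fun q => ∑ i, Ecomp x a i q * Ecomp x b i q

noncomputable def Gammal (x : (Fin 2 → ℝ) → (Fin 3 → ℝ)) (c a b : Fin 2) : (Fin 2 → ℝ) → ℝ :=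
  fun q => (1/2) * (pd a (Gmet x c b) q + pd b (Gmet x c a) q - pd c (Gmet x a b) q)

noncomputable def Gdet (x : (Fin 2 → ℝ) → (Fin 3 → ℝ)) : (Fin 2 → ℝ) → ℝ :=
  fun q => Gmet x 0 0 q * Gmet x 1 1 q - Gmet x 0 1 q * Gmet x 1 0 q

noncomputable def Ginv (x : (Fin 2 → ℝ) → (Fin 3 → ℝ)) (c d : Fin 2) : (Fin 2 → ℝ) → ℝ :=
  fun q => !![Gmet x 1 1 q, -(Gmet x 0 1 q); -(Gmet x 1 0 q), Gmet x 0 0 q] c d / Gdet x q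

noncomputable def Gamma2 (x : (Fin 2 → ℝ) → (Fin 3 → ℝ)) (c a b : Fin 2) : (Fin 2 → ℝ) → ℝ :=
  fun q => ∑ d, Ginv x c d q * Gammal x d a b q

noncomputable def Ncomp (n : (Fin 2 → ℝ) → (Fin 3 → ℝ)) (a : Fin 2) (i : Fin 3) :
    (Fin 2 → ℝ) → ℝ := fun q => pd a (fun r => n r i) q

noncomputable def Kform (x n : (Fin 2 → ℝ) → (Fin 3 → ℝ)) (a b : Fin 2) : (Fin 2 → ℝ) → ℝ :=
  fun q => ∑ i, Ncomp n a i q * Ecomp x b i q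

section smoothness
variable {U : Set (Fin 2 → ℝ)} {x n : (Fin 2 → ℝ) → (Fin 3 → ℝ)}

lemma cd_comp (hx : ContDiffOn ℝ (⊤ : ℕ∞) x U) (i : Fin 3) :
    ContDiffOn ℝ (⊤ : ℕ∞) (fun q => x q i) U := contDiffOn_pi.1 hx i

lemma cd_E (hU : IsOpen U) (hx : ContDiffOn ℝ (⊤ : ℕ∞) x U) (a : Fin 2) (i : Fin 3) :
    ContDiffOn ℝ (⊤ : ℕ∞) (Ecomp x a i) U := contDiffOn_pd hU (cd_comp hx i) a

lemma cd_G (hU : IsOpen U) (hx : ContDiffOn ℝ (⊤ : ℕ∞) x U) (a b : Fin 2) :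
    ContDiffOn ℝ (⊤ : ℕ∞) (Gmet x a b) U :=
  ContDiffOn.sum fun i _ => (cd_E hU hx a i).mul (cd_E hU hx b i)

lemma cd_Gl (hU : IsOpen U) (hx : ContDiffOn ℝ (⊤ : ℕ∞) x U) (c a b : Fin 2) :
    ContDiffOn ℝ (⊤ : ℕ∞) (Gammal x c a b) U :=
  contDiffOn_const.mul (((contDiffOn_pd hU (cd_G hU hx c b) a).add
    (contDiffOn_pd hU (cd_G hU hx c a) b)).sub (contDiffOn_pd hU (cd_G hU hx a b) c))

lemma cd_Gdet (hU : IsOpen U) (hx : ContDiffOn ℝ (⊤ : ℕ∞) x U) :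
    ContDiffOn ℝ (⊤ : ℕ∞) (Gdet x) U :=
  ((cd_G hU hx 0 0).mul (cd_G hU hx 1 1)).sub ((cd_G hU hx 0 1).mul (cd_G hU hx 1 0))

lemma cd_Ginv (hU : IsOpen U) (hx : ContDiffOn ℝ (⊤ : ℕ∞) x U)
    (hdg : ∀ q ∈ U, Gdet x q ≠ 0) (c d : Fin 2) :
    ContDiffOn ℝ (⊤ : ℕ∞) (Ginv x c d) U := by
  apply ContDiffOn.div _ (cd_Gdet hU hx) hdg
  fin_cases c <;> fin_cases d <;> simp <;>
    first
      | exact cd_G hU hx 1 1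
      | exact (cd_G hU hx 0 1).neg
      | exact (cd_G hU hx 1 0).neg
      | exact cd_G hU hx 0 0

lemma cd_Gamma2 (hU : IsOpen U) (hx : ContDiffOn ℝ (⊤ : ℕ∞) x U)
    (hdg : ∀ q ∈ U, Gdet x q ≠ 0) (c a b : Fin 2) :
    ContDiffOn ℝ (⊤ : ℕ∞) (Gamma2 x c a b) U :=
  ContDiffOn.sum fun d _ => (cd_Ginv hU hx hdg c d).mul (cd_Gl hU hx d a b)

lemma cd_N (hU : IsOpen U) (hn : ContDiffOn ℝ (⊤ : ℕ∞) n U) (a : Fin 2) (i : Fin 3) :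
    ContDiffOn ℝ (⊤ : ℕ∞) (Ncomp n a i) U := contDiffOn_pd hU (cd_comp hn i) a

lemma cd_K (hU : IsOpen U) (hx : ContDiffOn ℝ (⊤ : ℕ∞) x U) (hn : ContDiffOn ℝ (⊤ : ℕ∞) n U) (a b : Fin 2) :
    ContDiffOn ℝ (⊤ : ℕ∞) (Kform x n a b) U :=
  ContDiffOn.sum fun i _ => (cd_N hU hn a i).mul (cd_E hU hx b i)

end smoothness


/-! ### Pointwise geometric identities -/

section geometry
variable {U : Set (Fin 2 → ℝ)} {x n : (Fin 2 → ℝ) → (Fin 3 → ℝ)} {q : Fin 2 → ℝ}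

lemma pdx_eq (hU : IsOpen U) (hx : ContDiffOn ℝ (⊤ : ℕ∞) x U) (hq : q ∈ U) (a : Fin 2) (i : Fin 3) :
    pd a x q i = Ecomp x a i q :=
  pd_apply (dAt hU hx hq) i

lemma Gmet_symm (a b : Fin 2) : Gmet x a b q = Gmet x b a q := by
  simp [Gmet, mul_comm]

lemma gdet_ne (hU : IsOpen U) (hx : ContDiffOn ℝ (⊤ : ℕ∞) x U)
    (himm : ∀ p ∈ U, LinearIndependent ℝ (fun a : Fin 2 => pd a x p)) (hq : q ∈ U) :
    Gdet x q ≠ 0 := by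
  have hfun : (fun a : Fin 2 => ![(fun i => Ecomp x 0 i q), (fun i => Ecomp x 1 i q)] a)
      = (fun a => pd a x q) := by
    funext a
    fin_cases a <;> funext i <;> simp [(pdx_eq hU hx hq _ i).symm]
  have h := gram_det_ne_zero (fun i => Ecomp x 0 i q) (fun i => Ecomp x 1 i q)
    (by rw [hfun]; exact himm q hq)
  simpa [Gdet, Gmet] using h

lemma pd_comm_E (hU : IsOpen U) (hx : ContDiffOn ℝ (⊤ : ℕ∞) x U) (hq : q ∈ U)
    (u v : Fin 2) (i : Fin 3) :
    pd u (Ecomp x v i) q = pd v (Ecomp x u i) q := by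
  exact pd_comm hU (cd_comp hx i) hq u v

lemma pd_Gmet (hU : IsOpen U) (hx : ContDiffOn ℝ (⊤ : ℕ∞) x U) (hq : q ∈ U) (u v w : Fin 2) :
    pd u (Gmet x v w) q
      = ∑ i, (pd u (Ecomp x v i) q * Ecomp x w i q + Ecomp x v i q * pd u (Ecomp x w i) q) := by
  have h : Gmet x v w = fun q' => ∑ i, Ecomp x v i q' * Ecomp x w i q' := rfl
  rw [h, pd_sum _ _ (fun i _ => (dAt hU (cd_E hU hx v i) hq).fun_mul (dAt hU (cd_E hU hx w i) hq))]
  exact Finset.sum_congr rfl fun i _ =>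
    pd_mul (dAt hU (cd_E hU hx v i) hq) (dAt hU (cd_E hU hx w i) hq)

/-- Christoffel symbols of the first kind as tangential components. -/
lemma dot_e_de (hU : IsOpen U) (hx : ContDiffOn ℝ (⊤ : ℕ∞) x U) (hq : q ∈ U) (a b c : Fin 2) :
    ∑ i, Ecomp x c i q * pd a (Ecomp x b i) q = Gammal x c a b q := by
  have hac := fun i => pd_comm_E hU hx hq a c i
  have hbc := fun i => pd_comm_E hU hx hq b c i
  have hba := fun i => pd_comm_E hU hx hq b a i
  simp only [Gammal, pd_Gmet hU hx hq, Fin.sum_univ_three]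
  simp only [hac, hbc, hba]
  ring

/-- Normal components of second derivatives. -/
lemma dot_n_de (hU : IsOpen U) (hx : ContDiffOn ℝ (⊤ : ℕ∞) x U) (hn : ContDiffOn ℝ (⊤ : ℕ∞) n U)
    (horth : ∀ p ∈ U, ∀ a : Fin 2, ∑ i, n p i * pd a x p i = 0)
    (hq : q ∈ U) (a b : Fin 2) :
    ∑ i, n q i * pd a (Ecomp x b i) q = -(Kform x n a b q) := by
  have hzero : (fun r => ∑ i, n r i * Ecomp x b i r) =ᶠ[nhds q] (fun _ => (0:ℝ)) := by
    filter_upwards [hU.mem_nhds hq] with r hr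
    have := horth r hr b
    simp only [pdx_eq hU hx hr b] at this
    exact this
  have h := pd_congr_nhds (a := a) hzero
  rw [pd_const] at h
  rw [pd_sum _ _ (fun i _ =>
      (dAt hU (cd_comp hn i) hq).fun_mul (dAt hU (cd_E hU hx b i) hq))] at h
  have h2 : ∀ i ∈ Finset.univ, pd a (fun r => n r i * Ecomp x b i r) q
      = Ncomp n a i q * Ecomp x b i q + n q i * pd a (Ecomp x b i) q := fun i _ =>
    pd_mul (dAt hU (cd_comp hn i) hq) (dAt hU (cd_E hU hx b i) hq)
  rw [Finset.sum_congr rfl h2] at h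
  simp only [Kform, Fin.sum_univ_three] at h ⊢
  linarith [h]

lemma dot_n_dn (hU : IsOpen U) (hn : ContDiffOn ℝ (⊤ : ℕ∞) n U)
    (hunit : ∀ p ∈ U, ∑ i, n p i * n p i = 1) (hq : q ∈ U) (a : Fin 2) :
    ∑ i, n q i * Ncomp n a i q = 0 := by
  have hone : (fun r => ∑ i, n r i * n r i) =ᶠ[nhds q] (fun _ => (1:ℝ)) := by
    filter_upwards [hU.mem_nhds hq] with r hr
    exact hunit r hr
  have h := pd_congr_nhds (a := a) hone
  rw [pd_const] at h
  rw [pd_sum _ _ (fun i _ =>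
      (dAt hU (cd_comp hn i) hq).fun_mul (dAt hU (cd_comp hn i) hq))] at h
  have h2 : ∀ i ∈ Finset.univ, pd a (fun r => n r i * n r i) q
      = Ncomp n a i q * n q i + n q i * Ncomp n a i q := fun i _ =>
    pd_mul (dAt hU (cd_comp hn i) hq) (dAt hU (cd_comp hn i) hq)
  rw [Finset.sum_congr rfl h2] at h
  simp only [Fin.sum_univ_three] at h ⊢
  linarith [h]

lemma G_mul_Ginv (hdg : Gdet x q ≠ 0) (c d : Fin 2) :
    ∑ c', Gmet x c c' q * Ginv x c' d q = if c = d then 1 else 0 := by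
  have hd : Gmet x 0 0 q * Gmet x 1 1 q - Gmet x 0 1 q * Gmet x 1 0 q ≠ 0 := hdg
  have hd' : -(Gmet x 1 0 q * Gmet x 0 1 q) + Gmet x 1 1 q * Gmet x 0 0 q ≠ 0 := by
    intro h0; apply hd; linarith
  fin_cases c <;> fin_cases d <;> simp [Ginv, Gdet, Fin.sum_univ_two] <;>
    (rw [mul_div_assoc', mul_div_assoc', ← add_div, div_eq_iff hd]; ring)


/-- **Gauss formula**: decomposition of second derivatives in the moving frame. -/
lemma gauss_formula (hU : IsOpen U) (hx : ContDiffOn ℝ (⊤ : ℕ∞) x U) (hn : ContDiffOn ℝ (⊤ : ℕ∞) n U)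
    (himm : ∀ p ∈ U, LinearIndependent ℝ (fun a : Fin 2 => pd a x p))
    (hunit : ∀ p ∈ U, ∑ i, n p i * n p i = 1)
    (horth : ∀ p ∈ U, ∀ a : Fin 2, ∑ i, n p i * pd a x p i = 0)
    (hq : q ∈ U) (a b : Fin 2) (i : Fin 3) :
    pd a (Ecomp x b i) q
      = (∑ c, Gamma2 x c a b q * Ecomp x c i q) - Kform x n a b q * n q i := by
  have hdg := gdet_ne hU hx himm hq
  have ho : ∀ c : Fin 2, ∑ j, n q j * Ecomp x c j q = 0 := by
    intro c
    have h := horth q hq c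
    simp only [pdx_eq hU hx hq c] at h
    exact h
  have ho0 := ho 0
  have ho1 := ho 1
  have hL20 := dot_e_de hU hx hq a b 0
  have hL21 := dot_e_de hU hx hq a b 1
  have hL3 := dot_n_de hU hx hn horth hq a b
  have e00 := G_mul_Ginv (x := x) (q := q) hdg 0 0
  have e01 := G_mul_Ginv (x := x) (q := q) hdg 0 1
  have e10 := G_mul_Ginv (x := x) (q := q) hdg 1 0
  have e11 := G_mul_Ginv (x := x) (q := q) hdg 1 1
  rw [if_pos rfl] at e00 e11
  rw [if_neg (by decide)] at e01
  rw [if_neg (by decide)] at e10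
  have hun := hunit q hq
  set v : Fin 3 → ℝ := fun j =>
    pd a (Ecomp x b j) q
      - ((∑ c, Gamma2 x c a b q * Ecomp x c j q) - Kform x n a b q * n q j) with hv
  have hvz : ∀ j, v j = 0 := by
    apply triple_orth_eq_zero (fun j => Ecomp x 0 j q) (fun j => Ecomp x 1 j q) (fun j => n q j)
    · simpa [Gdet, Gmet] using hdg
    · exact ho0
    · exact ho1
    · exact hun
    · simp only [hv, Gamma2, Gmet, Fin.sum_univ_two, Fin.sum_univ_three] at *
      linear_combination hL20 - Gammal x 0 a b q * e00 - Gammal x 1 a b q * e01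
        + Kform x n a b q * ho0
    · simp only [hv, Gamma2, Gmet, Fin.sum_univ_two, Fin.sum_univ_three] at *
      linear_combination hL21 - Gammal x 0 a b q * e10 - Gammal x 1 a b q * e11
        + Kform x n a b q * ho1
    · simp only [hv, Gamma2, Gmet, Fin.sum_univ_two, Fin.sum_univ_three] at *
      linear_combination hL3
        - (Ginv x 0 0 q * Gammal x 0 a b q + Ginv x 0 1 q * Gammal x 1 a b q) * ho0
        - (Ginv x 1 0 q * Gammal x 0 a b q + Ginv x 1 1 q * Gammal x 1 a b q) * ho1
        + Kform x n a b q * hun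
  have h := hvz i
  simp only [hv] at h
  linarith [h]

/-- **Weingarten equation**: derivatives of the normal are tangential. -/
lemma weingarten (hU : IsOpen U) (hx : ContDiffOn ℝ (⊤ : ℕ∞) x U) (hn : ContDiffOn ℝ (⊤ : ℕ∞) n U)
    (himm : ∀ p ∈ U, LinearIndependent ℝ (fun a : Fin 2 => pd a x p))
    (hunit : ∀ p ∈ U, ∑ i, n p i * n p i = 1)
    (horth : ∀ p ∈ U, ∀ a : Fin 2, ∑ i, n p i * pd a x p i = 0)
    (hq : q ∈ U) (a : Fin 2) (i : Fin 3) :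
    Ncomp n a i q
      = ∑ c, (∑ d, Ginv x c d q * Kform x n a d q) * Ecomp x c i q := by
  have hdg := gdet_ne hU hx himm hq
  have ho : ∀ c : Fin 2, ∑ j, n q j * Ecomp x c j q = 0 := by
    intro c
    have h := horth q hq c
    simp only [pdx_eq hU hx hq c] at h
    exact h
  have ho0 := ho 0
  have ho1 := ho 1
  have hL4 := dot_n_dn hU hn hunit hq a
  have e00 := G_mul_Ginv (x := x) (q := q) hdg 0 0
  have e01 := G_mul_Ginv (x := x) (q := q) hdg 0 1
  have e10 := G_mul_Ginv (x := x) (q := q) hdg 1 0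
  have e11 := G_mul_Ginv (x := x) (q := q) hdg 1 1
  rw [if_pos rfl] at e00 e11
  rw [if_neg (by decide)] at e01
  rw [if_neg (by decide)] at e10
  set v : Fin 3 → ℝ := fun j =>
    Ncomp n a j q - ∑ c, (∑ d, Ginv x c d q * Kform x n a d q) * Ecomp x c j q with hv
  have hvz : ∀ j, v j = 0 := by
    apply triple_orth_eq_zero (fun j => Ecomp x 0 j q) (fun j => Ecomp x 1 j q) (fun j => n q j)
    · simpa [Gdet, Gmet] using hdg
    · exact ho0
    · exact ho1
    · exact hunit q hq
    · simp only [hv, Kform, Gmet, Fin.sum_univ_two, Fin.sum_univ_three] at *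
      linear_combination
        - (Ncomp n a 0 q * Ecomp x 0 0 q + Ncomp n a 1 q * Ecomp x 0 1 q
            + Ncomp n a 2 q * Ecomp x 0 2 q) * e00
        - (Ncomp n a 0 q * Ecomp x 1 0 q + Ncomp n a 1 q * Ecomp x 1 1 q
            + Ncomp n a 2 q * Ecomp x 1 2 q) * e01
    · simp only [hv, Kform, Gmet, Fin.sum_univ_two, Fin.sum_univ_three] at *
      linear_combination
        - (Ncomp n a 0 q * Ecomp x 0 0 q + Ncomp n a 1 q * Ecomp x 0 1 q
            + Ncomp n a 2 q * Ecomp x 0 2 q) * e10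
        - (Ncomp n a 0 q * Ecomp x 1 0 q + Ncomp n a 1 q * Ecomp x 1 1 q
            + Ncomp n a 2 q * Ecomp x 1 2 q) * e11
    · simp only [hv, Kform, Gmet, Fin.sum_univ_two, Fin.sum_univ_three] at *
      linear_combination hL4
        - (Ginv x 0 0 q * (Ncomp n a 0 q * Ecomp x 0 0 q + Ncomp n a 1 q * Ecomp x 0 1 q
              + Ncomp n a 2 q * Ecomp x 0 2 q)
            + Ginv x 0 1 q * (Ncomp n a 0 q * Ecomp x 1 0 q + Ncomp n a 1 q * Ecomp x 1 1 q
              + Ncomp n a 2 q * Ecomp x 1 2 q)) * ho0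
        - (Ginv x 1 0 q * (Ncomp n a 0 q * Ecomp x 0 0 q + Ncomp n a 1 q * Ecomp x 0 1 q
              + Ncomp n a 2 q * Ecomp x 0 2 q)
            + Ginv x 1 1 q * (Ncomp n a 0 q * Ecomp x 1 0 q + Ncomp n a 1 q * Ecomp x 1 1 q
              + Ncomp n a 2 q * Ecomp x 1 2 q)) * ho1
  have h := hvz i
  simp only [hv] at h
  linarith [h]

/-- The second fundamental form is symmetric. -/
lemma K_symm (hU : IsOpen U) (hx : ContDiffOn ℝ (⊤ : ℕ∞) x U) (hn : ContDiffOn ℝ (⊤ : ℕ∞) n U)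
    (horth : ∀ p ∈ U, ∀ a : Fin 2, ∑ i, n p i * pd a x p i = 0)
    (hq : q ∈ U) (a b : Fin 2) :
    Kform x n a b q = Kform x n b a q := by
  have h1 := dot_n_de hU hx hn horth hq a b
  have h2 := dot_n_de hU hx hn horth hq b a
  have hc : ∀ j, pd a (Ecomp x b j) q = pd b (Ecomp x a j) q :=
    fun j => pd_comm_E hU hx hq a b j
  simp only [hc] at h1
  rw [h1] at h2
  linarith [h2]


/-- **Gauss equation, tensor form**: the coordinate Riemann tensor equals `K ∧ K`. -/
lemma curvature_identity (hU : IsOpen U) (hx : ContDiffOn ℝ (⊤ : ℕ∞) x U) (hn : ContDiffOn ℝ (⊤ : ℕ∞) n U)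
    (himm : ∀ p ∈ U, LinearIndependent ℝ (fun a : Fin 2 => pd a x p))
    (hunit : ∀ p ∈ U, ∑ i, n p i * n p i = 1)
    (horth : ∀ p ∈ U, ∀ a : Fin 2, ∑ i, n p i * pd a x p i = 0)
    (hq : q ∈ U) (a b c d : Fin 2) :
    pd c (Gamma2 x a d b) q - pd d (Gamma2 x a c b) q
      + ∑ e, (Gamma2 x a c e q * Gamma2 x e d b q - Gamma2 x a d e q * Gamma2 x e c b q)
    = Kform x n d b q * (∑ e, Ginv x a e q * Kform x n c e q)
      - Kform x n c b q * (∑ e, Ginv x a e q * Kform x n d e q) := by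
  have hdg : ∀ r ∈ U, Gdet x r ≠ 0 := fun r hr => gdet_ne hU hx himm hr
  have hdgq := hdg q hq
  have dE : ∀ (u : Fin 2) (j : Fin 3), DifferentiableAt ℝ (Ecomp x u j) q :=
    fun u j => dAt hU (cd_E hU hx u j) hq
  have dG2 : ∀ (c' a' b' : Fin 2), DifferentiableAt ℝ (Gamma2 x c' a' b') q :=
    fun c' a' b' => dAt hU (cd_Gamma2 hU hx hdg c' a' b') hq
  have dK : ∀ (a' b' : Fin 2), DifferentiableAt ℝ (Kform x n a' b') q :=
    fun a' b' => dAt hU (cd_K hU hx hn a' b') hq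
  have dN : ∀ j : Fin 3, DifferentiableAt ℝ (fun r => n r j) q :=
    fun j => dAt hU (cd_comp hn j) hq
  -- expansion of the mixed second derivatives using the Gauss formula
  have hexp : ∀ (c' d' : Fin 2) (j : Fin 3),
      pd c' (fun r => pd d' (Ecomp x b j) r) q
        = (∑ e, (pd c' (Gamma2 x e d' b) q * Ecomp x e j q
            + Gamma2 x e d' b q * pd c' (Ecomp x e j) q))
          - (pd c' (Kform x n d' b) q * n q j + Kform x n d' b q * Ncomp n c' j q) := by
    intro c' d' j
    have heq : (fun r => pd d' (Ecomp x b j) r) =ᶠ[nhds q]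
        (fun r => (∑ e, Gamma2 x e d' b r * Ecomp x e j r) - Kform x n d' b r * n r j) := by
      filter_upwards [hU.mem_nhds hq] with r hr
      exact gauss_formula hU hx hn himm hunit horth hr d' b j
    rw [pd_congr_nhds heq]
    rw [pd_sub (DifferentiableAt.fun_sum fun e _ => (dG2 e d' b).fun_mul (dE e j))
      ((dK d' b).fun_mul (dN j))]
    rw [pd_sum _ _ (fun e _ => (dG2 e d' b).fun_mul (dE e j))]
    rw [pd_mul (dK d' b) (dN j)]
    congr 1
    exact Finset.sum_congr rfl fun e _ => pd_mul (dG2 e d' b) (dE e j)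
  have hswap : ∀ j : Fin 3, pd c (fun r => pd d (Ecomp x b j) r) q
      = pd d (fun r => pd c (Ecomp x b j) r) q :=
    fun j => pd_comm hU (cd_E hU hx b j) hq c d
  have hEq : ∀ j : Fin 3,
      (∑ e, (pd c (Gamma2 x e d b) q * Ecomp x e j q
          + Gamma2 x e d b q * pd c (Ecomp x e j) q))
        - (pd c (Kform x n d b) q * n q j + Kform x n d b q * Ncomp n c j q)
      = (∑ e, (pd d (Gamma2 x e c b) q * Ecomp x e j q
          + Gamma2 x e c b q * pd d (Ecomp x e j) q))
        - (pd d (Kform x n c b) q * n q j + Kform x n c b q * Ncomp n d j q) := by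
    intro j
    rw [← hexp c d j, ← hexp d c j]
    exact hswap j
  have hGF : ∀ (u v : Fin 2) (j : Fin 3), pd u (Ecomp x v j) q
      = (∑ e, Gamma2 x e u v q * Ecomp x e j q) - Kform x n u v q * n q j :=
    fun u v j => gauss_formula hU hx hn himm hunit horth hq u v j
  have hW : ∀ (u : Fin 2) (j : Fin 3), Ncomp n u j q
      = ∑ e, (∑ f, Ginv x e f q * Kform x n u f q) * Ecomp x e j q :=
    fun u j => weingarten hU hx hn himm hunit horth hq u j
  have ho : ∀ c' : Fin 2, ∑ j, n q j * Ecomp x c' j q = 0 := by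
    intro c'
    have h := horth q hq c'
    simp only [pdx_eq hU hx hq c'] at h
    exact h
  have ho0 := ho 0
  have ho1 := ho 1
  set C : Fin 2 → ℝ := fun e =>
    (pd c (Gamma2 x e d b) q - pd d (Gamma2 x e c b) q
      + ∑ e', (Gamma2 x e c e' q * Gamma2 x e' d b q - Gamma2 x e d e' q * Gamma2 x e' c b q))
    - (Kform x n d b q * (∑ f, Ginv x e f q * Kform x n c f q)
        - Kform x n c b q * (∑ f, Ginv x e f q * Kform x n d f q)) with hC
  set D : ℝ :=
    (pd d (Kform x n c b) q - pd c (Kform x n d b) q)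
      + ∑ e, (Gamma2 x e c b q * Kform x n d e q - Gamma2 x e d b q * Kform x n c e q) with hD
  have hkey : ∀ j : Fin 3,
      C 0 * Ecomp x 0 j q + C 1 * Ecomp x 1 j q + D * n q j = 0 := by
    intro j
    have h := hEq j
    have gfc0 := hGF c 0 j
    have gfc1 := hGF c 1 j
    have gfd0 := hGF d 0 j
    have gfd1 := hGF d 1 j
    have wc := hW c j
    have wd := hW d j
    simp only [Fin.sum_univ_two] at h gfc0 gfc1 gfd0 gfd1 wc wd
    simp only [hC, hD, Fin.sum_univ_two]
    linear_combination h - Gamma2 x 0 d b q * gfc0 - Gamma2 x 1 d b q * gfc1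
      + Gamma2 x 0 c b q * gfd0 + Gamma2 x 1 c b q * gfd1
      + Kform x n d b q * wc - Kform x n c b q * wd
  have hdot0 : ∑ j, Ecomp x 0 j q
      * (C 0 * Ecomp x 0 j q + C 1 * Ecomp x 1 j q + D * n q j) = 0 :=
    Finset.sum_eq_zero fun j _ => by rw [hkey j, mul_zero]
  have hdot1 : ∑ j, Ecomp x 1 j q
      * (C 0 * Ecomp x 0 j q + C 1 * Ecomp x 1 j q + D * n q j) = 0 :=
    Finset.sum_eq_zero fun j _ => by rw [hkey j, mul_zero]
  simp only [Fin.sum_univ_three] at hdot0 hdot1 ho0 ho1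
  have hdet : (Ecomp x 0 0 q * Ecomp x 0 0 q + Ecomp x 0 1 q * Ecomp x 0 1 q
        + Ecomp x 0 2 q * Ecomp x 0 2 q)
      * (Ecomp x 1 0 q * Ecomp x 1 0 q + Ecomp x 1 1 q * Ecomp x 1 1 q
        + Ecomp x 1 2 q * Ecomp x 1 2 q)
      - (Ecomp x 0 0 q * Ecomp x 1 0 q + Ecomp x 0 1 q * Ecomp x 1 1 q
        + Ecomp x 0 2 q * Ecomp x 1 2 q)
      * (Ecomp x 1 0 q * Ecomp x 0 0 q + Ecomp x 1 1 q * Ecomp x 0 1 q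
        + Ecomp x 1 2 q * Ecomp x 0 2 q) ≠ 0 := by
    have h := hdgq
    simp only [Gdet, Gmet, Fin.sum_univ_three] at h
    intro h0
    apply h
    linear_combination h0
  have h1 : C 0 * (Ecomp x 0 0 q * Ecomp x 0 0 q + Ecomp x 0 1 q * Ecomp x 0 1 q
        + Ecomp x 0 2 q * Ecomp x 0 2 q)
      + C 1 * (Ecomp x 1 0 q * Ecomp x 0 0 q + Ecomp x 1 1 q * Ecomp x 0 1 q
        + Ecomp x 1 2 q * Ecomp x 0 2 q) = 0 := by
    linear_combination hdot0 - D * ho0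
  have h2 : C 0 * (Ecomp x 0 0 q * Ecomp x 1 0 q + Ecomp x 0 1 q * Ecomp x 1 1 q
        + Ecomp x 0 2 q * Ecomp x 1 2 q)
      + C 1 * (Ecomp x 1 0 q * Ecomp x 1 0 q + Ecomp x 1 1 q * Ecomp x 1 1 q
        + Ecomp x 1 2 q * Ecomp x 1 2 q) = 0 := by
    linear_combination hdot1 - D * ho1
  obtain ⟨hC0, hC1⟩ := pair_zero hdet h1 h2
  simp only [hC] at hC0 hC1
  have ha : a = 0 ∨ a = 1 := by omega
  rcases ha with rfl | rfl
  · linear_combination hC0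
  · linear_combination hC1

end geometry

/-- **Gauss equation**: `det(g⁻¹K) = ½ R` where `R` is the scalar curvature of `g`;
equivalently `½(H² − K_{ab}K^{ab}) = ½ R`. -/
theorem gauss_equation (U : Set (Fin 2 → ℝ)) (hU : IsOpen U)
    (x n : (Fin 2 → ℝ) → (Fin 3 → ℝ))
    (hx : ContDiffOn ℝ (⊤ : ℕ∞) x U) (hn : ContDiffOn ℝ (⊤ : ℕ∞) n U)
    (himm : ∀ p ∈ U, LinearIndependent ℝ (fun a : Fin 2 => pd a x p))
    (hunit : ∀ p ∈ U, ∑ i, n p i * n p i = 1)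
    (horth : ∀ p ∈ U, ∀ a : Fin 2, ∑ i, n p i * pd a x p i = 0)
    (g : (Fin 2 → ℝ) → Matrix (Fin 2) (Fin 2) ℝ)
    (hg : ∀ p a b, g p a b = ∑ i, pd a x p i * pd b x p i)
    (K : (Fin 2 → ℝ) → Matrix (Fin 2) (Fin 2) ℝ)
    (hK : ∀ p a b, K p a b = ∑ i, pd a n p i * pd b x p i)
    (Γ : (Fin 2 → ℝ) → Fin 2 → Fin 2 → Fin 2 → ℝ)
    (hΓ : ∀ p c a b, Γ p c a b = (1/2) * ∑ d, (g p)⁻¹ c d *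
      (pd a (fun q => g q d b) p + pd b (fun q => g q d a) p - pd d (fun q => g q a b) p))
    (Riem : (Fin 2 → ℝ) → Fin 2 → Fin 2 → Fin 2 → Fin 2 → ℝ)
    (hRiem : ∀ p a b c d, Riem p a b c d =
      pd c (fun q => Γ q a d b) p - pd d (fun q => Γ q a c b) p +
        ∑ e, (Γ p a c e * Γ p e d b - Γ p a d e * Γ p e c b))
    (R : (Fin 2 → ℝ) → ℝ)
    (hR : ∀ p, R p = ∑ a, ∑ b, ∑ d, (g p)⁻¹ b d * Riem p a b a d)
    (H : (Fin 2 → ℝ) → ℝ) (hH : ∀ p, H p = Matrix.trace ((g p)⁻¹ * K p)) :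
    ∀ p ∈ U,
      Matrix.det ((g p)⁻¹ * K p) = (1/2) * R p ∧
      (1/2) * ((H p)^2 - ∑ a, ∑ b, K p a b * ((g p)⁻¹ * K p * (g p)⁻¹) a b) =
        (1/2) * R p := by
  intro p hp
  have hdg : ∀ r ∈ U, Gdet x r ≠ 0 := fun r hr => gdet_ne hU hx himm hr
  have hdgp := hdg p hp
  -- bridges between the given data and the scalar quantities
  have hgE : ∀ q ∈ U, ∀ a b : Fin 2, g q a b = Gmet x a b q := by
    intro q hq a b
    have h : Gmet x a b q = ∑ i, Ecomp x a i q * Ecomp x b i q := rfl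
    rw [hg, h]
    exact Finset.sum_congr rfl fun i _ => by
      rw [pdx_eq hU hx hq a i, pdx_eq hU hx hq b i]
  have hKE : ∀ q ∈ U, ∀ a b : Fin 2, K q a b = Kform x n a b q := by
    intro q hq a b
    have h : Kform x n a b q = ∑ i, Ncomp n a i q * Ecomp x b i q := rfl
    rw [hK, h]
    exact Finset.sum_congr rfl fun i _ => by
      rw [pdx_eq hU hx hq b i, pd_apply (dAt hU hn hq) i]
      rfl
  have hdetg : ∀ q ∈ U, (g q).det = Gdet x q := by
    intro q hq
    rw [Matrix.det_fin_two, hgE q hq, hgE q hq, hgE q hq, hgE q hq]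
    rfl
  have hginv : ∀ q ∈ U, ∀ c d : Fin 2, (g q)⁻¹ c d = Ginv x c d q := by
    intro q hq c d
    rw [Matrix.inv_def, Ring.inverse_eq_inv', Matrix.adjugate_fin_two]
    simp only [Matrix.smul_apply, smul_eq_mul]
    rw [hdetg q hq]
    fin_cases c <;> fin_cases d <;>
      simp [Ginv, hgE q hq, div_eq_inv_mul] <;> ring
  have hΓE : ∀ q ∈ U, ∀ c a b : Fin 2, Γ q c a b = Gamma2 x c a b q := by
    intro q hq c a b
    rw [hΓ]
    have h : Gamma2 x c a b q = ∑ d, Ginv x c d q * Gammal x d a b q := rfl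
    rw [h, Finset.mul_sum]
    apply Finset.sum_congr rfl
    intro d _
    have e1 : pd a (fun r => g r d b) q = pd a (Gmet x d b) q := by
      apply pd_congr_nhds
      filter_upwards [hU.mem_nhds hq] with r hr
      exact hgE r hr d b
    have e2 : pd b (fun r => g r d a) q = pd b (Gmet x d a) q := by
      apply pd_congr_nhds
      filter_upwards [hU.mem_nhds hq] with r hr
      exact hgE r hr d a
    have e3 : pd d (fun r => g r a b) q = pd d (Gmet x a b) q := by
      apply pd_congr_nhds
      filter_upwards [hU.mem_nhds hq] with r hr
      exact hgE r hr a b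
    rw [hginv q hq, e1, e2, e3]
    have h2 : Gammal x d a b q
        = (1/2) * (pd a (Gmet x d b) q + pd b (Gmet x d a) q - pd d (Gmet x a b) q) := rfl
    rw [h2]
    ring
  have hRval : ∀ a b c d : Fin 2, Riem p a b c d
      = Kform x n d b p * (∑ e, Ginv x a e p * Kform x n c e p)
        - Kform x n c b p * (∑ e, Ginv x a e p * Kform x n d e p) := by
    intro a b c d
    rw [hRiem]
    have e1 : pd c (fun r => Γ r a d b) p = pd c (Gamma2 x a d b) p := by
      apply pd_congr_nhds
      filter_upwards [hU.mem_nhds hp] with r hr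
      exact hΓE r hr a d b
    have e2 : pd d (fun r => Γ r a c b) p = pd d (Gamma2 x a c b) p := by
      apply pd_congr_nhds
      filter_upwards [hU.mem_nhds hp] with r hr
      exact hΓE r hr a c b
    rw [e1, e2]
    simp only [hΓE p hp]
    exact curvature_identity hU hx hn himm hunit horth hp a b c d
  have hG10 : Gmet x 1 0 p = Gmet x 0 1 p := Gmet_symm 1 0
  have hK10 : Kform x n 1 0 p = Kform x n 0 1 p := K_symm hU hx hn horth hp 1 0
  have hd : Gmet x 0 0 p * Gmet x 1 1 p - Gmet x 0 1 p * Gmet x 0 1 p ≠ 0 := by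
    intro h0
    apply hdgp
    have h : Gdet x p = Gmet x 0 0 p * Gmet x 1 1 p - Gmet x 0 1 p * Gmet x 1 0 p := rfl
    rw [h, hG10]
    exact h0
  have hmain : Matrix.det ((g p)⁻¹ * K p) = (1/2) * R p := by
    rw [Matrix.det_fin_two, hR]
    simp only [Matrix.mul_apply, Fin.sum_univ_two, hginv p hp, hKE p hp, hRval]
    simp only [Fin.sum_univ_two, Ginv, Gdet, hG10, hK10]
    norm_num
    field_simp
    ring
  refine ⟨hmain, ?_⟩
  rw [← hmain, hH, Matrix.trace_fin_two, Matrix.det_fin_two]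
  have hKs : K p 1 0 = K p 0 1 := by
    rw [hKE p hp 1 0, hKE p hp 0 1, hK10]
  simp only [Matrix.mul_apply, Fin.sum_univ_two, hKs]
  ring
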